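/- On ℝ² × ℝ² (coordinates (x, y, ξ, η)), let p(x,y,ξ,η) = (ξ² + η²)·I₂ + diag(−1 − λ, −4 − λ) + χ̃(y)·R(x,ξ) + λ·φ(y)·ψ(x)·I₂, a 2×2 real symmetric matrix-valued symbol, where: R(x,ξ) = R₀(x) + ξ·R₁(x) with R₀, R₁ smooth, compactly supported, real symmetric 2×2 matrix-valued; ψ, φ, χ̃ ∈ C_c^∞(ℝ; [0,1]); ψ = 1 on a neighborhood of supp R₀ ∪ supp R₁; χ̃ = 1 on a neighborhood of 0; y·φ′(y) < 0 for every y ≠ 0 in the interior of supp φ; and φ′(y) ≠ 0 for every y ∈ supp χ̃′. Then for every sufficiently large λ, for all (x, y, ξ, η) with det p(x,y,ξ,η) = 0, the matrix inequality {p, yη·I₂} = 2η²·I₂ − y·χ̃′(y)·R(x,ξ) − λ·y·φ′(y)·ψ(x)·I₂ ⪰ (2η² + 2|y·φ′(y)|·ψ(x))·I₂ holds, i.e. the difference of the two sides is positive semidefinite. -/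

import Mathlib

set_option maxHeartbeats 1000000
open Matrix

/-- 2×2 real matrices. -/
abbrev M2 := Matrix (Fin 2) (Fin 2) ℝ

/-- The matrix-valued Schrödinger symbol
`p = (ξ² + η²)I₂ + diag(−1−λ, −4−λ) + χ̃(y)(R₀(x) + ξR₁(x)) + λφ(y)ψ(x)I₂`. -/
noncomputable def pSym (R₀ R₁ : ℝ → M2) (ψ φ χt : ℝ → ℝ) (lam : ℝ)
    (x y ξ η : ℝ) : M2 :=
  (ξ ^ 2 + η ^ 2) • (1 : M2) + Matrix.diagonal ![-1 - lam, -4 - lam]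
    + χt y • (R₀ x + ξ • R₁ x) + (lam * φ y * ψ x) • (1 : M2)

/-- The matrix-valued Poisson bracket
`{p, g} = ∂_ξ p ∂_x g + ∂_η p ∂_y g − ∂_x p ∂_ξ g − ∂_y p ∂_η g` of a matrix-valued symbol
`p` and a scalar symbol `g` on `ℝ² × ℝ²`, coordinates `(x, y, ξ, η)`. -/
noncomputable def matPB (p : ℝ → ℝ → ℝ → ℝ → M2) (g : ℝ → ℝ → ℝ → ℝ → ℝ)
    (x y ξ η : ℝ) : M2 :=
  Matrix.of fun i j =>
    deriv (fun s => p x y s η i j) ξ * deriv (fun s => g s y ξ η) x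
      + deriv (fun s => p x y ξ s i j) η * deriv (fun s => g x s ξ η) y
      - deriv (fun s => p s y ξ η i j) x * deriv (fun s => g x y s η) ξ
      - deriv (fun s => p x s ξ η i j) y * deriv (fun s => g x y ξ s) η

lemma key_quad (q lam C₀ C₁ t w e00 e01 e10 e11 v0 v1 : ℝ)
    (hq : 2 * lam + (8 + 4 * C₀ + 4 * C₁ ^ 2) < q) (hlam : 0 ≤ lam)
    (ht : t ^ 2 ≤ q) (hw : 0 ≤ w) (hC₀ : 0 ≤ C₀)
    (h00 : |e00| ≤ C₀ + t * C₁) (h01 : |e01| ≤ C₀ + t * C₁)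
    (h10 : |e10| ≤ C₀ + t * C₁) (h11 : |e11| ≤ C₀ + t * C₁)
    (hv : 0 < v0 ^ 2 + v1 ^ 2) :
    0 < (q - 1 - lam + w + e00) * v0 ^ 2 + (e01 + e10) * (v0 * v1)
        + (q - 4 - lam + w + e11) * v1 ^ 2 := by
  obtain ⟨h00a, h00b⟩ := abs_le.1 h00
  obtain ⟨h01a, h01b⟩ := abs_le.1 h01
  obtain ⟨h10a, h10b⟩ := abs_le.1 h10
  obtain ⟨h11a, h11b⟩ := abs_le.1 h11
  obtain ⟨D, hDdef⟩ : ∃ D : ℝ, D = C₀ + q / 4 + C₁ ^ 2 := ⟨_, rfl⟩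
  have hD : C₀ + t * C₁ ≤ D := by rw [hDdef]; nlinarith [sq_nonneg (t - 2 * C₁)]
  have hD0 : 0 ≤ D := by rw [hDdef]; nlinarith
  have hA : D < q - 1 - lam + w + e00 := by rw [hDdef]; nlinarith
  have hC : D < q - 4 - lam + w + e11 := by rw [hDdef]; nlinarith
  have hB1 : 0 ≤ 2 * D + (e01 + e10) := by linarith
  have hB2 : 0 ≤ 2 * D - (e01 + e10) := by linarith
  have hbr : 0 ≤ D * (v0 ^ 2 + v1 ^ 2) + (e01 + e10) * (v0 * v1) := by
    nlinarith [mul_nonneg hB1 (sq_nonneg (v0 + v1)), mul_nonneg hB2 (sq_nonneg (v0 - v1))]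
  have hcases : 0 < v0 ^ 2 ∨ 0 < v1 ^ 2 := by
    by_contra h; push_neg at h; nlinarith [sq_nonneg v0, sq_nonneg v1]
  rcases hcases with h | h
  · nlinarith [mul_pos (sub_pos.2 hA) h, mul_nonneg (le_of_lt (sub_pos.2 hC)) (sq_nonneg v1)]
  · nlinarith [mul_pos (sub_pos.2 hC) h, mul_nonneg (le_of_lt (sub_pos.2 hA)) (sq_nonneg v0)]

lemma key_lam (c M C₀ C₁ B lam ξ : ℝ) (hc : 0 < c) (hM : 0 ≤ M) (hC₀ : 0 ≤ C₀)
    (hB : 0 ≤ B) (hξ : ξ ^ 2 ≤ 2 * lam + B)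
    (hlam : 4 + B + (4 * M * C₀ * c + 8 * (M * C₁) ^ 2 + B) / c ^ 2 ≤ lam) :
    2 * (M * (C₀ + |ξ| * C₁)) ≤ (lam - 2) * c := by
  have hc2 : (0:ℝ) < c ^ 2 := by positivity
  have hcl : c ^ 2 * (4 + B) + (4 * M * C₀ * c + 8 * (M * C₁) ^ 2 + B) ≤ c ^ 2 * lam := by
    have := mul_le_mul_of_nonneg_left hlam hc2.le
    rw [mul_add, mul_div_cancel₀ _ hc2.ne'] at this
    linarith
  have habs : 0 ≤ |ξ| := abs_nonneg ξ
  have h1 : 2 * (M * C₁) * |ξ| * c ≤ c ^ 2 * ξ ^ 2 / 4 + 4 * (M * C₁) ^ 2 := by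
    nlinarith [sq_nonneg (c * |ξ| - 4 * (M * C₁)), sq_abs ξ]
  have h2 : c ^ 2 * ξ ^ 2 ≤ c ^ 2 * (2 * lam + B) := by
    nlinarith [mul_le_mul_of_nonneg_left hξ (le_of_lt hc2)]
  have key : (2 * (M * (C₀ + |ξ| * C₁))) * c ≤ ((lam - 2) * c) * c := by
    nlinarith [mul_nonneg (mul_nonneg hM hC₀) hc.le, mul_nonneg hc.le hB, sq_nonneg c]
  exact le_of_mul_le_mul_right key hc

/-- PSD criterion for `t•1 - S` with symmetric `S` and small entries. -/
lemma psd_of_entries (t : ℝ) (S : M2) (hS : S.IsSymm)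
    (hb : ∀ i j, |S i j| ≤ t / 2) : (t • (1 : M2) - S).PosSemidef := by
  rw [Matrix.posSemidef_iff_dotProduct_mulVec]
  constructor
  · ext i j
    simp [Matrix.conjTranspose_apply, Matrix.one_apply, hS.apply i j, eq_comm]
  · intro v
    have h00 := abs_le.1 (hb 0 0); have h01 := abs_le.1 (hb 0 1)
    have h10 := abs_le.1 (hb 1 0); have h11 := abs_le.1 (hb 1 1)
    have hq : star v ⬝ᵥ (t • (1 : M2) - S) *ᵥ v
        = (t - S 0 0) * (v 0)^2 - (S 0 1 + S 1 0) * (v 0 * v 1) + (t - S 1 1) * (v 1)^2 := by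
      simp [dotProduct, Matrix.mulVec, Fin.sum_univ_two, Matrix.one_apply]; ring
    rw [hq]
    nlinarith [sq_nonneg (v 0 + v 1), sq_nonneg (v 0 - v 1), sq_nonneg (v 0), sq_nonneg (v 1)]

/-- The Poisson bracket computation. -/
lemma matPB_eq (R₀ R₁ : ℝ → M2) (ψ φ χt : ℝ → ℝ) (lam : ℝ)
    (hφ : ContDiff ℝ (⊤ : ℕ∞) φ) (hχt : ContDiff ℝ (⊤ : ℕ∞) χt)
    (x y ξ η : ℝ) :
    matPB (pSym R₀ R₁ ψ φ χt lam) (fun _ y _ η => y * η) x y ξ η =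
      (2 * η ^ 2) • (1 : M2) - (y * deriv χt y) • (R₀ x + ξ • R₁ x)
        - (lam * y * deriv φ y * ψ x) • (1 : M2) := by
  have hφd : HasDerivAt φ (deriv φ y) y :=
    ((hφ.differentiable (by simp)) y).hasDerivAt
  have hχd : HasDerivAt χt (deriv χt y) y :=
    ((hχt.differentiable (by simp)) y).hasDerivAt
  ext i j
  have e1 : deriv (fun s => ((s : ℝ) * η : ℝ)) y = η := by
    simpa using (hasDerivAt_id y).mul_const η |>.deriv
  have e2 : deriv (fun s => ((y : ℝ) * s : ℝ)) η = y := by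
    simpa using ((hasDerivAt_id η).const_mul y).deriv
  have e3 : deriv (fun _ : ℝ => y * η) x = 0 := deriv_const _ _
  have e4 : deriv (fun _ : ℝ => y * η) ξ = 0 := deriv_const _ _
  have dη : deriv (fun s => pSym R₀ R₁ ψ φ χt lam x y ξ s i j) η
      = 2 * η * (1 : M2) i j := by
    have hfun : (fun s => pSym R₀ R₁ ψ φ χt lam x y ξ s i j)
        = fun s => s ^ 2 * (1 : M2) i j +
            (ξ ^ 2 * (1 : M2) i j + Matrix.diagonal ![-1 - lam, -4 - lam] i j
              + χt y * ((R₀ x + ξ • R₁ x) i j) + (lam * φ y * ψ x) * (1 : M2) i j) := by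
      funext s
      simp [pSym, Matrix.add_apply, Matrix.smul_apply, smul_eq_mul]
      ring
    rw [hfun]
    have := (((hasDerivAt_pow 2 η).mul_const ((1 : M2) i j)).add_const
      (ξ ^ 2 * (1 : M2) i j + Matrix.diagonal ![-1 - lam, -4 - lam] i j
        + χt y * ((R₀ x + ξ • R₁ x) i j) + (lam * φ y * ψ x) * (1 : M2) i j)).deriv
    simpa using this
  have dy : deriv (fun s => pSym R₀ R₁ ψ φ χt lam x s ξ η i j) y
      = deriv χt y * ((R₀ x + ξ • R₁ x) i j) + deriv φ y * (lam * ψ x * (1 : M2) i j) := by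
    have hfun : (fun s => pSym R₀ R₁ ψ φ χt lam x s ξ η i j)
        = fun s => (χt s * ((R₀ x + ξ • R₁ x) i j) + φ s * (lam * ψ x * (1 : M2) i j))
            + ((ξ ^ 2 + η ^ 2) * (1 : M2) i j + Matrix.diagonal ![-1 - lam, -4 - lam] i j) := by
      funext s
      simp [pSym, Matrix.add_apply, Matrix.smul_apply, smul_eq_mul]
      ring
    rw [hfun]
    exact (((hχd.mul_const _).add (hφd.mul_const _)).add_const _).deriv
  show matPB _ _ x y ξ η i j = _
  rw [matPB]
  simp only [Matrix.of_apply, e1, e2, e3, e4, dη, dy, mul_zero, zero_sub, zero_add]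
  simp [Matrix.sub_apply, Matrix.smul_apply, smul_eq_mul]
  ring

/-- On the characteristic set, `ξ² + η²` is bounded by `2λ + B`. -/
lemma char_bound (R₀ R₁ : ℝ → M2) (ψ φ χt : ℝ → ℝ) (lam : ℝ) (C₀ C₁ : ℝ)
    (hC₀n : 0 ≤ C₀) (hC₁n : 0 ≤ C₁)
    (hC₀ : ∀ x i j, |R₀ x i j| ≤ C₀) (hC₁ : ∀ x i j, |R₁ x i j| ≤ C₁)
    (hR₀s : ∀ x, (R₀ x).IsSymm) (hR₁s : ∀ x, (R₁ x).IsSymm)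
    (hψ0 : ∀ x, 0 ≤ ψ x) (hφ0 : ∀ y, 0 ≤ φ y)
    (hχ : ∀ y, χt y ∈ Set.Icc (0:ℝ) 1)
    (hlam : 0 ≤ lam)
    (x y ξ η : ℝ) (hdet : (pSym R₀ R₁ ψ φ χt lam x y ξ η).det = 0) :
    ξ ^ 2 + η ^ 2 ≤ 2 * lam + (8 + 4 * C₀ + 4 * C₁ ^ 2) := by
  by_contra hq
  push_neg at hq
  have hpos : (pSym R₀ R₁ ψ φ χt lam x y ξ η).PosDef := by
    rw [Matrix.posDef_iff_dotProduct_mulVec]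
    constructor
    · ext i j
      fin_cases i <;> fin_cases j <;>
        simp [pSym, Matrix.add_apply, Matrix.smul_apply, Matrix.one_apply,
          Matrix.conjTranspose_apply, (hR₀s x).apply, (hR₁s x).apply]
    · intro v hv
      have hquad : star v ⬝ᵥ (pSym R₀ R₁ ψ φ χt lam x y ξ η) *ᵥ v =
          (ξ^2 + η^2 - 1 - lam + lam * φ y * ψ x + χt y * (R₀ x 0 0 + ξ * R₁ x 0 0)) * (v 0)^2
          + (χt y * (R₀ x 0 1 + ξ * R₁ x 0 1) + χt y * (R₀ x 1 0 + ξ * R₁ x 1 0)) * (v 0 * v 1)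
          + (ξ^2 + η^2 - 4 - lam + lam * φ y * ψ x + χt y * (R₀ x 1 1 + ξ * R₁ x 1 1)) * (v 1)^2 := by
        simp [pSym, dotProduct, Matrix.mulVec, Fin.sum_univ_two, Matrix.add_apply,
          Matrix.smul_apply, Matrix.one_apply, smul_eq_mul]
        ring
      rw [hquad]
      have hv01 : 0 < (v 0)^2 + (v 1)^2 := by
        rcases (lt_or_eq_of_le (by positivity : (0:ℝ) ≤ (v 0)^2 + (v 1)^2)) with h | h
        · exact h
        · exfalso
          apply hv
          have h0 : v 0 = 0 := by
            have := sq_nonneg (v 0); have := sq_nonneg (v 1)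
            have h2 : (v 0) ^ 2 = 0 := by linarith
            exact pow_eq_zero_iff (two_ne_zero) |>.1 h2
          have h1 : v 1 = 0 := by
            have := sq_nonneg (v 0); have := sq_nonneg (v 1)
            have h2 : (v 1) ^ 2 = 0 := by linarith
            exact pow_eq_zero_iff (two_ne_zero) |>.1 h2
          funext i
          fin_cases i <;> simpa
      have hb : ∀ i j, |χt y * (R₀ x i j + ξ * R₁ x i j)| ≤ C₀ + |ξ| * C₁ := by
        intro i j
        rw [abs_mul]
        have h1 : |R₀ x i j + ξ * R₁ x i j| ≤ C₀ + |ξ| * C₁ := by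
          calc |R₀ x i j + ξ * R₁ x i j| ≤ |R₀ x i j| + |ξ * R₁ x i j| := abs_add_le _ _
          _ ≤ C₀ + |ξ| * C₁ := by
              rw [abs_mul]
              exact add_le_add (hC₀ x i j) (mul_le_mul_of_nonneg_left (hC₁ x i j) (abs_nonneg ξ))
        have hχy := hχ y
        have h2 : |χt y| ≤ 1 := abs_le.2 ⟨by linarith [hχy.1], hχy.2⟩
        calc |χt y| * |R₀ x i j + ξ * R₁ x i j| ≤ 1 * (C₀ + |ξ| * C₁) :=
          mul_le_mul h2 h1 (abs_nonneg _) zero_le_one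
        _ = C₀ + |ξ| * C₁ := one_mul _
      have hw : 0 ≤ lam * φ y * ψ x := mul_nonneg (mul_nonneg hlam (hφ0 y)) (hψ0 x)
      have ht : |ξ| ^ 2 ≤ ξ ^ 2 + η ^ 2 := by nlinarith [sq_abs ξ, sq_nonneg η]
      exact key_quad (ξ^2 + η^2) lam C₀ C₁ (|ξ|) (lam * φ y * ψ x) _ _ _ _ (v 0) (v 1)
        hq hlam ht hw hC₀n (hb 0 0) (hb 0 1) (hb 1 0) (hb 1 1) hv01
  exact hpos.det_pos.ne' hdet

/-- For the matrix-valued Schrödinger symbol `p`, for all sufficiently large `λ`, on the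
characteristic set `det p = 0` one has
`{p, yη I₂} = 2η²I₂ − yχ̃′(y)R(x,ξ) − λyφ′(y)ψ(x)I₂ ⪰ (2η² + 2|yφ′(y)|ψ(x))I₂`. -/
theorem stmt_14 (R₀ R₁ : ℝ → M2)
    (hR₀ : ∀ i j, ContDiff ℝ (⊤ : ℕ∞) fun x => R₀ x i j)
    (hR₁ : ∀ i j, ContDiff ℝ (⊤ : ℕ∞) fun x => R₁ x i j)
    (hR₀c : HasCompactSupport R₀) (hR₁c : HasCompactSupport R₁)
    (hR₀s : ∀ x, (R₀ x).IsSymm) (hR₁s : ∀ x, (R₁ x).IsSymm)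
    (ψ φ χt : ℝ → ℝ)
    (hψ : ContDiff ℝ (⊤ : ℕ∞) ψ) (hφ : ContDiff ℝ (⊤ : ℕ∞) φ)
    (hχt : ContDiff ℝ (⊤ : ℕ∞) χt)
    (hψc : HasCompactSupport ψ) (hφc : HasCompactSupport φ)
    (hχtc : HasCompactSupport χt)
    (hψ01 : ∀ x, ψ x ∈ Set.Icc (0 : ℝ) 1) (hφ01 : ∀ y, φ y ∈ Set.Icc (0 : ℝ) 1)
    (hχt01 : ∀ y, χt y ∈ Set.Icc (0 : ℝ) 1)
    (hψ1 : ∃ U : Set ℝ, IsOpen U ∧ tsupport R₀ ∪ tsupport R₁ ⊆ U ∧ ∀ x ∈ U, ψ x = 1)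
    (hχt1 : ∀ᶠ y in nhds (0 : ℝ), χt y = 1)
    (hφ' : ∀ y ∈ interior (tsupport φ), y ≠ 0 → y * deriv φ y < 0)
    (hφχ : ∀ y ∈ tsupport (deriv χt), deriv φ y ≠ 0) :
    ∃ lam0 : ℝ, ∀ lam : ℝ, lam0 ≤ lam →
      ∀ x y ξ η : ℝ, (pSym R₀ R₁ ψ φ χt lam x y ξ η).det = 0 →
        matPB (pSym R₀ R₁ ψ φ χt lam) (fun _ y _ η => y * η) x y ξ η =
          (2 * η ^ 2) • (1 : M2) - (y * deriv χt y) • (R₀ x + ξ • R₁ x)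
            - (lam * y * deriv φ y * ψ x) • (1 : M2) ∧
        ((2 * η ^ 2) • (1 : M2) - (y * deriv χt y) • (R₀ x + ξ • R₁ x)
            - (lam * y * deriv φ y * ψ x) • (1 : M2)
          - (2 * η ^ 2 + 2 * |y * deriv φ y| * ψ x) • (1 : M2)).PosSemidef := by
  classical
  obtain ⟨U, hUopen, hUsub, hUψ⟩ := hψ1
  -- derivative of φ is continuous
  have cφ' : Continuous (deriv φ) := hφ.continuous_deriv (by exact_mod_cast le_top)
  have cχ' : Continuous (deriv χt) := hχt.continuous_deriv (by exact_mod_cast le_top)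
  -- y * deriv φ y ≤ 0 everywhere
  have hyφ : ∀ y : ℝ, y * deriv φ y ≤ 0 := by
    intro y
    by_cases hy : y ∈ interior (tsupport φ)
    · rcases eq_or_ne y 0 with rfl | hy0
      · simp
      · exact (hφ' y hy hy0).le
    · have hzero : deriv φ y = 0 := by
        have hEq : Set.EqOn (deriv φ) 0 ((tsupport φ)ᶜ) := by
          intro z hz
          have hz' : φ =ᶠ[nhds z] fun _ => (0:ℝ) := by
            have : (tsupport φ)ᶜ ∈ nhds z :=
              (isClosed_tsupport φ).isOpen_compl.mem_nhds hz
            filter_upwards [this] with w hw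
            exact image_eq_zero_of_notMem_tsupport hw
          show deriv φ z = 0
          rw [hz'.deriv_eq]
          exact deriv_const z 0
        have hcl : Set.EqOn (deriv φ) 0 (closure ((tsupport φ)ᶜ)) :=
          hEq.closure cφ' continuous_const
        have : y ∈ closure ((tsupport φ)ᶜ) := by
          rw [closure_compl]; exact hy
        exact hcl this
      simp [hzero]
  -- bounds on the entries of R₀ and R₁
  have hbound : ∀ (R : ℝ → M2), HasCompactSupport R → (∀ i j, ContDiff ℝ (⊤ : ℕ∞) fun x => R x i j) →
      ∃ C : ℝ, 0 ≤ C ∧ ∀ x i j, |R x i j| ≤ C := by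
    intro R hRc hR
    have hent : ∀ i j : Fin 2, ∃ C : ℝ, ∀ x, |R x i j| ≤ C := by
      intro i j
      have hsupp : HasCompactSupport fun x => R x i j :=
        hRc.comp_left (g := fun m : M2 => m i j) rfl
      obtain ⟨C, hC⟩ := hsupp.exists_bound_of_continuous (hR i j).continuous
      exact ⟨C, fun x => by simpa [Real.norm_eq_abs] using hC x⟩
    obtain ⟨C00, h00⟩ := hent 0 0
    obtain ⟨C01, h01⟩ := hent 0 1
    obtain ⟨C10, h10⟩ := hent 1 0
    obtain ⟨C11, h11⟩ := hent 1 1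
    refine ⟨max (max |C00| |C01|) (max |C10| |C11|), by positivity, fun x i j => ?_⟩
    fin_cases i <;> fin_cases j
    · exact le_trans (h00 x) (le_trans (le_abs_self _) (le_trans (le_max_left _ _) (le_max_left _ _)))
    · exact le_trans (h01 x) (le_trans (le_abs_self _) (le_trans (le_max_right _ _) (le_max_left _ _)))
    · exact le_trans (h10 x) (le_trans (le_abs_self _) (le_trans (le_max_left _ _) (le_max_right _ _)))
    · exact le_trans (h11 x) (le_trans (le_abs_self _) (le_trans (le_max_right _ _) (le_max_right _ _)))
  obtain ⟨C₀, hC₀n, hC₀⟩ := hbound R₀ hR₀c hR₀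
  obtain ⟨C₁, hC₁n, hC₁⟩ := hbound R₁ hR₁c hR₁
  obtain ⟨B, hBdef⟩ : ∃ B : ℝ, B = 8 + 4 * C₀ + 4 * C₁ ^ 2 := ⟨_, rfl⟩
  have hB0 : 0 ≤ B := by rw [hBdef]; positivity
  -- the support of deriv χt avoids 0
  have hK0 : (0 : ℝ) ∉ tsupport (deriv χt) := by
    obtain ⟨V, hVnhds, hVopen, hV0⟩ := eventually_nhds_iff.1 hχt1
    have hVsub : tsupport (deriv χt) ⊆ Vᶜ := by
      rw [tsupport]
      refine closure_minimal ?_ (hVopen.isClosed_compl)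
      intro z hz
      simp only [Set.mem_compl_iff]
      intro hzV
      apply hz
      have hz' : χt =ᶠ[nhds z] fun _ => 1 := by
        filter_upwards [hVopen.mem_nhds hzV] with w hw
        exact hVnhds w hw
      simp [Function.mem_support, hz'.deriv_eq]
    intro h0
    exact (hVsub h0) hV0
  -- construct c and M
  obtain ⟨c, M, hc, hM, hKprop⟩ : ∃ c M : ℝ, 0 < c ∧ 0 ≤ M ∧
      ∀ y : ℝ, deriv χt y ≠ 0 → c ≤ |y * deriv φ y| ∧ |y * deriv χt y| ≤ M := by
    by_cases hKe : (tsupport (deriv χt)).Nonempty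
    · have hKc : IsCompact (tsupport (deriv χt)) := hχtc.deriv
      have hf : Continuous fun y : ℝ => |y * deriv φ y| :=
        (continuous_id.mul cφ').abs
      have hg : Continuous fun y : ℝ => |y * deriv χt y| :=
        (continuous_id.mul cχ').abs
      obtain ⟨z, hzK, hzmin⟩ := hKc.exists_isMinOn hKe hf.continuousOn
      obtain ⟨w, hwK, hwmax⟩ := hKc.exists_isMaxOn hKe hg.continuousOn
      refine ⟨|z * deriv φ z|, |w * deriv χt w|, ?_, abs_nonneg _, ?_⟩
      · have hz0 : z ≠ 0 := fun h => hK0 (h ▸ hzK)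
        have hφz : deriv φ z ≠ 0 := hφχ z hzK
        exact abs_pos.2 (mul_ne_zero hz0 hφz)
      · intro y hy
        have hyK : y ∈ tsupport (deriv χt) := subset_tsupport _ hy
        exact ⟨hzmin hyK, hwmax hyK⟩
    · refine ⟨1, 0, one_pos, le_refl 0, fun y hy => absurd ?_ hy⟩
      by_contra h
      exact hKe ⟨y, subset_tsupport _ h⟩
  -- choose lam0
  refine ⟨4 + B + (4 * M * C₀ * c + 8 * (M * C₁) ^ 2 + B) / c ^ 2, fun lam hlam x y ξ η hdet => ?_⟩
  have hlam4 : 4 ≤ lam := by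
    have : 0 ≤ (4 * M * C₀ * c + 8 * (M * C₁) ^ 2 + B) / c ^ 2 := by positivity
    linarith
  have hlam0 : 0 ≤ lam := by linarith
  have hψ0 : ∀ t, 0 ≤ ψ t := fun t => (hψ01 t).1
  have hφ0 : ∀ t, 0 ≤ φ t := fun t => (hφ01 t).1
  -- the bracket identity
  refine ⟨matPB_eq R₀ R₁ ψ φ χt lam hφ hχt x y ξ η, ?_⟩
  -- ξ² bound on the characteristic set
  have hξbound : ξ ^ 2 + η ^ 2 ≤ 2 * lam + (8 + 4 * C₀ + 4 * C₁ ^ 2) :=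
    char_bound R₀ R₁ ψ φ χt lam C₀ C₁ hC₀n hC₁n hC₀ hC₁ hR₀s hR₁s hψ0 hφ0 hχt01 hlam0
      x y ξ η hdet
  have hξ2 : ξ ^ 2 ≤ 2 * lam + B := by rw [hBdef]; nlinarith [sq_nonneg η]
  -- rewrite the target matrix as t • 1 - S
  obtain ⟨t, htdef⟩ : ∃ t : ℝ, t = (lam - 2) * |y * deriv φ y| * ψ x := ⟨_, rfl⟩
  have ht0 : 0 ≤ t := by
    rw [htdef]
    exact mul_nonneg (mul_nonneg (by linarith) (abs_nonneg _)) (hψ0 x)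
  have hmat : (2 * η ^ 2) • (1 : M2) - (y * deriv χt y) • (R₀ x + ξ • R₁ x)
        - (lam * y * deriv φ y * ψ x) • (1 : M2)
      - (2 * η ^ 2 + 2 * |y * deriv φ y| * ψ x) • (1 : M2)
      = t • (1 : M2) - (y * deriv χt y) • (R₀ x + ξ • R₁ x) := by
    rw [htdef, abs_of_nonpos (hyφ y)]
    ext i j
    by_cases hij : i = j <;>
      simp [Matrix.sub_apply, Matrix.add_apply, Matrix.smul_apply, Matrix.one_apply,
        smul_eq_mul, hij] <;>
      ring
  rw [hmat]
  -- entry bound for S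
  apply psd_of_entries
  · -- symmetry of S
    unfold Matrix.IsSymm
    ext i j
    simp [Matrix.transpose_apply, Matrix.add_apply, Matrix.smul_apply, smul_eq_mul,
      (hR₀s x).apply i j, (hR₁s x).apply i j]
    ring
  · intro i j
    by_cases hχ0 : deriv χt y = 0
    · simp [hχ0]
      linarith
    · obtain ⟨hcle, hMle⟩ := hKprop y hχ0
      by_cases hR0 : R₀ x = 0 ∧ R₁ x = 0
      · simp [Matrix.smul_apply, Matrix.add_apply, hR0.1, hR0.2]
        linarith
      · -- x is in the support, hence ψ x = 1
        have hxU : x ∈ U := by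
          apply hUsub
          rcases not_and_or.1 hR0 with h | h
          · exact Set.mem_union_left _ (subset_tsupport R₀ h)
          · exact Set.mem_union_right _ (subset_tsupport R₁ h)
        have hψx : ψ x = 1 := hUψ x hxU
        -- |S i j| ≤ M * (C₀ + |ξ| C₁) ≤ (lam-2) c / 2 ≤ t/2
        have hRb : |(R₀ x + ξ • R₁ x) i j| ≤ C₀ + |ξ| * C₁ := by
          calc |(R₀ x + ξ • R₁ x) i j| = |R₀ x i j + ξ * R₁ x i j| := by
                simp [Matrix.add_apply, Matrix.smul_apply, smul_eq_mul]
          _ ≤ |R₀ x i j| + |ξ * R₁ x i j| := abs_add_le _ _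
          _ ≤ C₀ + |ξ| * C₁ := by
              rw [abs_mul]
              exact add_le_add (hC₀ x i j) (mul_le_mul_of_nonneg_left (hC₁ x i j) (abs_nonneg ξ))
        have hSb : |((y * deriv χt y) • (R₀ x + ξ • R₁ x)) i j| ≤ M * (C₀ + |ξ| * C₁) := by
          rw [Matrix.smul_apply, smul_eq_mul, abs_mul]
          exact mul_le_mul hMle hRb (abs_nonneg _) hM
        have hkey : 2 * (M * (C₀ + |ξ| * C₁)) ≤ (lam - 2) * c :=
          key_lam c M C₀ C₁ B lam ξ hc hM hC₀n hB0 hξ2 hlam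
        have ht : (lam - 2) * c ≤ t := by
          rw [htdef, hψx, mul_one]
          exact mul_le_mul_of_nonneg_left hcle (by linarith)
        calc |((y * deriv χt y) • (R₀ x + ξ • R₁ x)) i j| ≤ M * (C₀ + |ξ| * C₁) := hSb
        _ ≤ (lam - 2) * c / 2 := by linarith
        _ ≤ t / 2 := by linarith
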